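/- Fix t₀ > 0 and u, v ∈ [0,1]. Then ψ(s,t;u,v) → min(u,v) as (s,t) → (t₀,t₀) with s,t > 0; i.e., for every ε > 0 there is δ > 0 such that for all s,t > 0 with |s−t₀| < δ and |t−t₀| < δ one has |ψ(s,t;u,v) − min(u,v)| < ε. -/

import Mathlib

open MeasureTheory Set Filter

/-- Density of the standard normal distribution (φ). -/
noncomputable def stdNormalPDF (x : ℝ) : ℝ := (Real.sqrt (2 * Real.pi))⁻¹ * Real.exp (-x ^ 2 / 2)

/-- Cumulative distribution function of the standard normal distribution (Φ). -/
noncomputable def stdNormalCDF (x : ℝ) : ℝ := ∫ t in Set.Iic x, stdNormalPDF t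

/-- The standard normal quantile function (Φ⁻¹), the inverse of Φ on (0,1). -/
noncomputable def stdNormalCDFInv : ℝ → ℝ := Function.invFun stdNormalCDF

/-- The integrand of the Brownian-copula kernel; the `if` branches encode the
conventions Φ⁻¹(0) = -∞ (so Φ(·) = 0) and Φ⁻¹(1) = +∞ (so Φ(·) = 1). -/
noncomputable def psiIntegrand (s t v w : ℝ) : ℝ :=
  if v ≤ 0 then 0
  else if 1 ≤ v then 1
  else stdNormalCDF ((Real.sqrt (max s t) * stdNormalCDFInv v -
      Real.sqrt (min s t) * stdNormalCDFInv w) / Real.sqrt |t - s|)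

/-- The Brownian-copula kernel ψ(s,t;u,v). -/
noncomputable def psi (s t u v : ℝ) : ℝ :=
  if 0 < |t - s| then ∫ w in (0:ℝ)..u, psiIntegrand s t v w
  else if 0 < t then min u v
  else u * v

open Topology ProbabilityTheory

/-! Off the diagonal, ψ(s,t;u,v) integrates over w ∈ (0,u) the value of Φ at a quotient whose
numerator tends to √t₀ (Φ⁻¹ v − Φ⁻¹ w) as s, t → t₀, while the denominator √|t − s| tends to 0⁺.
So for almost every w the integrand tends to the indicator of w ≤ v, and dominated convergence
(the integrand lies in [0,1]) gives the limit ∫₀ᵘ 1_{w ≤ v} dw = min(u,v). On the diagonal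
ψ = min(u,v) outright. -/

lemma stdNormalPDF_eq_gaussianPDFReal : stdNormalPDF = gaussianPDFReal 0 1 := by
  ext x
  simp [stdNormalPDF, gaussianPDFReal]

lemma stdNormalCDF_eq_cdf : stdNormalCDF = cdf (gaussianReal 0 1) := by
  ext x
  rw [cdf_eq_real, measureReal_def, gaussianReal_apply_eq_integral _ one_ne_zero,
    ENNReal.toReal_ofReal (setIntegral_nonneg measurableSet_Iic
      fun y _ => gaussianPDFReal_nonneg 0 1 y), stdNormalCDF, stdNormalPDF_eq_gaussianPDFReal]

lemma continuous_stdNormalCDF : Continuous stdNormalCDF := by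
  refine continuous_iff_continuousAt.2 fun x => ?_
  have hint : IntegrableOn stdNormalPDF (Iic (x + 1)) := by
    rw [stdNormalPDF_eq_gaussianPDFReal]
    exact (integrable_gaussianPDFReal 0 1).integrableOn
  exact hint.continuousOn_Iic_primitive_Iic.continuousAt (Iic_mem_nhds (lt_add_one x))

lemma stdNormalCDF_stdNormalCDFInv {y : ℝ} (hy : y ∈ Ioo (0 : ℝ) 1) :
    stdNormalCDF (stdNormalCDFInv y) = y := by
  refine Function.invFun_eq ?_
  rw [stdNormalCDF_eq_cdf]
  obtain ⟨a, ha⟩ := ((tendsto_cdf_atBot _).eventually (eventually_lt_nhds hy.1)).exists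
  obtain ⟨b, hb⟩ := ((tendsto_cdf_atTop _).eventually (eventually_gt_nhds hy.2)).exists
  exact intermediate_value_univ a b (stdNormalCDF_eq_cdf ▸ continuous_stdNormalCDF) ⟨ha.le, hb.le⟩

lemma strictMonoOn_stdNormalCDFInv : StrictMonoOn stdNormalCDFInv (Ioo (0 : ℝ) 1) := by
  intro y hy z hz hyz
  by_contra! h
  have hzy := stdNormalCDF_eq_cdf ▸ monotone_cdf (gaussianReal 0 1) h
  rw [stdNormalCDF_stdNormalCDFInv hy, stdNormalCDF_stdNormalCDFInv hz] at hzy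
  exact hyz.not_ge hzy

lemma aemeasurable_stdNormalCDFInv : AEMeasurable stdNormalCDFInv (volume.restrict (Ioc 0 1)) := by
  rw [← Measure.restrict_congr_set Ioo_ae_eq_Ioc]
  exact aemeasurable_restrict_of_monotoneOn measurableSet_Ioo
    strictMonoOn_stdNormalCDFInv.monotoneOn

lemma abs_stdNormalCDF_le_one (x : ℝ) : |stdNormalCDF x| ≤ 1 := by
  rw [stdNormalCDF_eq_cdf, abs_of_nonneg (cdf_nonneg _ x)]
  exact cdf_le_one _ x

lemma tendsto_stdNormalCDF_div_of_pos {α : Type*} {l : Filter α} {N D : α → ℝ} {c : ℝ}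
    (hN : Tendsto N l (𝓝 c)) (hc : 0 < c) (hD : Tendsto D l (𝓝[>] 0)) :
    Tendsto (fun x => stdNormalCDF (N x / D x)) l (𝓝 1) := by
  rw [stdNormalCDF_eq_cdf]
  exact (tendsto_cdf_atTop _).comp (hN.pos_mul_atTop hc (tendsto_inv_nhdsGT_zero.comp hD))

lemma tendsto_stdNormalCDF_div_of_neg {α : Type*} {l : Filter α} {N D : α → ℝ} {c : ℝ}
    (hN : Tendsto N l (𝓝 c)) (hc : c < 0) (hD : Tendsto D l (𝓝[>] 0)) :
    Tendsto (fun x => stdNormalCDF (N x / D x)) l (𝓝 0) := by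
  rw [stdNormalCDF_eq_cdf]
  exact (tendsto_cdf_atBot _).comp (hN.neg_mul_atTop hc (tendsto_inv_nhdsGT_zero.comp hD))

lemma abs_psiIntegrand_le_one (s t v w : ℝ) : |psiIntegrand s t v w| ≤ 1 := by
  unfold psiIntegrand
  split_ifs
  · simp
  · simp
  · exact abs_stdNormalCDF_le_one _

lemma aestronglyMeasurable_psiIntegrand (s t v : ℝ) {u : ℝ} (hu : u ≤ 1) :
    AEStronglyMeasurable (psiIntegrand s t v) (volume.restrict (Ioc 0 u)) := by
  have hinv : AEMeasurable stdNormalCDFInv (volume.restrict (Ioc 0 u)) :=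
    aemeasurable_stdNormalCDFInv.mono_measure
      (Measure.restrict_mono (Ioc_subset_Ioc_right hu) le_rfl)
  unfold psiIntegrand
  split_ifs
  · exact aestronglyMeasurable_const
  · exact aestronglyMeasurable_const
  · exact (continuous_stdNormalCDF.measurable.comp_aemeasurable
      ((aemeasurable_const.sub (hinv.const_mul _)).div_const _)).aestronglyMeasurable

lemma tendsto_psiIntegrand {t₀ v w : ℝ} (ht₀ : 0 < t₀)
    (hw : w ∈ Ioo (0 : ℝ) 1) (hwv : w ≠ v) :
    Tendsto (fun p : ℝ × ℝ => psiIntegrand p.1 p.2 v w)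
      (𝓝 (t₀, t₀) ⊓ 𝓟 {p | 0 < |p.2 - p.1|}) (𝓝 ((Iic v).indicator 1 w)) := by
  by_cases hv0 : v ≤ 0
  · simpa [psiIntegrand, hv0, show ¬ w ≤ v by linarith [hw.1]] using tendsto_const_nhds
  by_cases hv1 : 1 ≤ v
  · simpa [psiIntegrand, hv0, hv1, show w ≤ v by linarith [hw.2]] using tendsto_const_nhds
  have hvI : v ∈ Ioo (0 : ℝ) 1 := ⟨not_le.1 hv0, not_le.1 hv1⟩
  simp only [psiIntegrand, hv0, hv1, if_false]
  set a := stdNormalCDFInv v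
  set b := stdNormalCDFInv w
  have hN : Tendsto (fun p : ℝ × ℝ => √(max p.1 p.2) * a - √(min p.1 p.2) * b)
      (𝓝 (t₀, t₀) ⊓ 𝓟 {p | 0 < |p.2 - p.1|}) (𝓝 (√t₀ * (a - b))) := by
    have hcont : Continuous fun p : ℝ × ℝ => √(max p.1 p.2) * a - √(min p.1 p.2) * b := by
      fun_prop
    simpa [mul_sub] using (hcont.tendsto (t₀, t₀)).mono_left inf_le_left
  have hD : Tendsto (fun p : ℝ × ℝ => √|p.2 - p.1|)
      (𝓝 (t₀, t₀) ⊓ 𝓟 {p | 0 < |p.2 - p.1|}) (𝓝[>] 0) := by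
    refine tendsto_nhdsWithin_iff.2 ⟨?_, ?_⟩
    · have hcont : Continuous fun p : ℝ × ℝ => √|p.2 - p.1| := by fun_prop
      simpa using (hcont.tendsto (t₀, t₀)).mono_left inf_le_left
    · exact mem_inf_of_right fun p hp => Real.sqrt_pos.2 hp
  have hst₀ : 0 < √t₀ := Real.sqrt_pos.2 ht₀
  rcases hwv.lt_or_gt with hlt | hgt
  · have hba : b < a := strictMonoOn_stdNormalCDFInv hw hvI hlt
    simpa [hlt.le] using
      tendsto_stdNormalCDF_div_of_pos hN (mul_pos hst₀ (sub_pos.2 hba)) hD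
  · have hab : a < b := strictMonoOn_stdNormalCDFInv hvI hw hgt
    simpa [not_le.2 hgt] using
      tendsto_stdNormalCDF_div_of_neg hN (mul_neg_of_pos_of_neg hst₀ (sub_neg.2 hab)) hD

lemma intervalIntegral_indicator_Iic_one {u v : ℝ} (hu : 0 ≤ u) (hv : 0 ≤ v) :
    ∫ w in (0 : ℝ)..u, (Iic v).indicator 1 w = min u v := by
  rw [intervalIntegral.integral_of_le hu, integral_indicator_one measurableSet_Iic,
    measureReal_restrict_apply measurableSet_Iic, inter_comm, Ioc_inter_Iic, Real.volume_real_Ioc,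
    sub_zero, max_eq_left (le_min hu hv)]

lemma tendsto_psi {t₀ u v : ℝ} (ht₀ : 0 < t₀) (hu : u ∈ Icc (0 : ℝ) 1) (hv : 0 ≤ v) :
    Tendsto (fun p : ℝ × ℝ => psi p.1 p.2 u v) (𝓝 (t₀, t₀)) (𝓝 (min u v)) := by
  have hoff : Tendsto (fun p : ℝ × ℝ => ∫ w in (0 : ℝ)..u, psiIntegrand p.1 p.2 v w)
      (𝓝 (t₀, t₀) ⊓ 𝓟 {p | 0 < |p.2 - p.1|}) (𝓝 (min u v)) := by
    rw [← intervalIntegral_indicator_Iic_one hu.1 hv]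
    refine intervalIntegral.tendsto_integral_filter_of_dominated_convergence (fun _ => 1)
      ?_ ?_ intervalIntegrable_const ?_
    · rw [uIoc_of_le hu.1]
      exact Eventually.of_forall fun p => aestronglyMeasurable_psiIntegrand _ _ _ hu.2
    · exact Eventually.of_forall fun p => ae_of_all _ fun w _ => abs_psiIntegrand_le_one _ _ _ _
    · filter_upwards [Measure.ae_ne volume 1, Measure.ae_ne volume v] with w hw1 hwv hw
      rw [uIoc_of_le hu.1] at hw
      exact tendsto_psiIntegrand ht₀ ⟨hw.1, lt_of_le_of_ne (hw.2.trans hu.2) hw1⟩ hwv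
  have hdiag : Tendsto (fun p : ℝ × ℝ => if 0 < p.2 then min u v else u * v)
      (𝓝 (t₀, t₀) ⊓ 𝓟 {p | ¬ 0 < |p.2 - p.1|}) (𝓝 (min u v)) := by
    refine tendsto_const_nhds.congr' (EventuallyEq.filter_mono ?_ inf_le_left)
    filter_upwards [continuous_snd.tendsto (t₀, t₀) |>.eventually (lt_mem_nhds ht₀)] with p hp
    rw [if_pos hp]
  exact hoff.if hdiag

/-- For t₀ > 0 and u, v ∈ [0,1], ψ(s,t;u,v) → min(u,v) as (s,t) → (t₀,t₀) with s,t > 0. -/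
theorem psi_tendsto_min (t₀ u v : ℝ) (ht₀ : 0 < t₀)
    (hu : u ∈ Set.Icc (0:ℝ) 1) (hv : v ∈ Set.Icc (0:ℝ) 1) :
    ∀ ε > 0, ∃ δ > 0, ∀ s t : ℝ, 0 < s → 0 < t →
      |s - t₀| < δ → |t - t₀| < δ → |psi s t u v - min u v| < ε := by
  intro ε hε
  obtain ⟨δ, hδ, hball⟩ := Metric.tendsto_nhds_nhds.1 (tendsto_psi ht₀ hu hv.1) ε hε
  refine ⟨δ, hδ, fun s t _ _ hs ht => ?_⟩
  have hclose := @hball (s, t) (by simpa [Prod.dist_eq, Real.dist_eq] using And.intro hs ht)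
  simpa [Real.dist_eq] using hclose
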